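/- Let g_1, …, g_k be pairwise commuting elements of the n-qupit Pauli group, g_i = ω^{c_i} X(𝐚^i)Z(𝐛^i), such that the vectors (𝐚^1, 𝐛^1), …, (𝐚^k, 𝐛^k) ∈ F_p^{2n} are linearly independent over F_p. For i ∈ {1, …, k} set P_{i0} = (1/p) Σ_{l=0}^{p−1} g_i^l. Then rank(P_{10} P_{20} ⋯ P_{k0}) = p^{n−k}; that is, the common eigenvalue-one eigenspace of g_1, …, g_k has dimension p^{n−k}. -/

import Mathlib

open Matrix Complex

noncomputable def ω (p : ℕ) : ℂ := Complex.exp (2 * Real.pi * Complex.I / p)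

lemma omega_pow_p (p : ℕ) (hp : p ≠ 0) : ω p ^ p = 1 := by
  rw [ω, ← Complex.exp_nat_mul, mul_div_assoc', mul_comm (p:ℂ), mul_div_assoc,
    div_self (by exact_mod_cast hp)]
  simp [Complex.exp_two_pi_mul_I]

lemma omega_pow_mod (p : ℕ) (hp : p ≠ 0) (m : ℕ) : ω p ^ m = ω p ^ (m % p) := by
  conv_lhs => rw [← Nat.div_add_mod m p]
  rw [pow_add, pow_mul, omega_pow_p p hp, one_pow, one_mul]

lemma omega_ne_one (p : ℕ) (hp : 2 ≤ p) : ω p ≠ 1 := by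
  intro h
  rw [ω, Complex.exp_eq_one_iff] at h
  obtain ⟨m, hm⟩ := h
  have hπ : (2 * Real.pi * Complex.I : ℂ) ≠ 0 := by
    simp [Real.pi_ne_zero, Complex.I_ne_zero]
  have hp0 : (p : ℂ) ≠ 0 := by
    exact_mod_cast Nat.cast_ne_zero.mpr (by omega)
  rw [div_eq_iff hp0] at hm
  have h1 : (1 : ℂ) = m * p := by
    have key : (1:ℂ) * (2 * Real.pi * Complex.I) = ((m:ℂ) * p) * (2 * Real.pi * Complex.I) := by
      rw [one_mul]; linear_combination hm
    exact mul_right_cancel₀ hπ key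
  have h2 : (1 : ℤ) = m * p := by exact_mod_cast h1
  have hdvd : (p : ℤ) ∣ 1 := ⟨m, by linarith [h2]⟩
  have := Int.le_of_dvd one_pos hdvd
  omega

section echar
variable (p : ℕ) [hp : Fact p.Prime]

lemma pne : p ≠ 0 := hp.out.ne_zero

/-- additive character e(u) = ω^{u.val}. -/
noncomputable def ee (u : ZMod p) : ℂ := ω p ^ u.val

lemma ee_zero : ee p 0 = 1 := by
  simp [ee, ZMod.val_zero]

lemma ee_add (u v : ZMod p) : ee p (u + v) = ee p u * ee p v := by
  have : NeZero p := ⟨pne p⟩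
  rw [ee, ee, ee, ZMod.val_add, ← omega_pow_mod p (pne p), pow_add]

lemma ee_nsmul (m : ℕ) (u : ZMod p) : ee p (m • u) = ee p u ^ m := by
  induction m with
  | zero => simp [ee_zero]
  | succ t ih => rw [succ_nsmul, ee_add, ih, pow_succ]

/-- sum over ZMod p equals sum over range p of the val. -/
lemma sum_zmod_val {α : Type*} [AddCommMonoid α] (f : ℕ → α) :
    ∑ u : ZMod p, f u.val = ∑ m ∈ Finset.range p, f m := by
  have : NeZero p := ⟨pne p⟩
  refine Finset.sum_nbij' (fun u => u.val) (fun m => (m : ZMod p)) ?_ ?_ ?_ ?_ ?_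
  · intro u _; exact Finset.mem_range.mpr u.val_lt
  · intro m _; exact Finset.mem_univ _
  · intro u _; exact ZMod.natCast_rightInverse u
  · intro m hm; exact ZMod.val_cast_of_lt (Finset.mem_range.mp hm)
  · intro u _; rfl

lemma sum_ee : ∑ u : ZMod p, ee p u = 0 := by
  have h2 : 2 ≤ p := hp.out.two_le
  have : ∑ u : ZMod p, ee p u = ∑ m ∈ Finset.range p, ω p ^ m := sum_zmod_val p _
  rw [this]
  have := geom_sum_mul (ω p) p
  rw [omega_pow_p p (pne p), sub_self] at this
  have hω : ω p - 1 ≠ 0 := sub_ne_zero.mpr (omega_ne_one p h2)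
  exact (mul_eq_zero.mp this).resolve_right hω

lemma sum_ee_mul (u : ZMod p) (hu : u ≠ 0) : ∑ t : ZMod p, ee p (u * t) = 0 := by
  rw [Fintype.sum_equiv (Equiv.mulLeft₀ u hu) (fun t => ee p (u * t)) (fun t => ee p t)
    (fun t => rfl)]
  exact sum_ee p

end echar

noncomputable def XmatN (p n : ℕ) (a : Fin n → ZMod p) :
    Matrix (Fin n → ZMod p) (Fin n → ZMod p) ℂ :=
  fun y x => if y = x + a then 1 else 0

noncomputable def ZmatN (p n : ℕ) (b : Fin n → ZMod p) :
    Matrix (Fin n → ZMod p) (Fin n → ZMod p) ℂ :=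
  Matrix.diagonal fun x => ω p ^ (b ⬝ᵥ x).val

section Wmat
variable (p n : ℕ) [hp : Fact p.Prime]

/-- short for the unscaled Pauli `X(a)Z(b)`. -/
noncomputable def Wmat (a b : Fin n → ZMod p) :
    Matrix (Fin n → ZMod p) (Fin n → ZMod p) ℂ :=
  XmatN p n a * ZmatN p n b

lemma Wmat_apply (a b : Fin n → ZMod p) (y x : Fin n → ZMod p) :
    Wmat p n a b y x = if y = x + a then ee p (b ⬝ᵥ x) else 0 := by
  rw [Wmat, ZmatN, Matrix.mul_diagonal]
  simp only [XmatN, ee, ite_mul, one_mul, zero_mul]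

lemma Wmat_mul (a b a' b' : Fin n → ZMod p) :
    Wmat p n a b * Wmat p n a' b' =
      ee p (b ⬝ᵥ a') • Wmat p n (a + a') (b + b') := by
  ext y x
  rw [Matrix.mul_apply]
  rw [Finset.sum_eq_single (x + a')
    (fun z _ hz => by rw [Wmat_apply p n a' b', if_neg hz, mul_zero])
    (fun h => absurd (Finset.mem_univ _) h)]
  rw [Wmat_apply, Wmat_apply, Matrix.smul_apply, Wmat_apply, if_pos rfl, smul_eq_mul]
  by_cases h : y = x + (a + a')
  · rw [if_pos h, if_pos (by rw [h]; abel)]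
    rw [← ee_add, ← ee_add]
    congr 1
    rw [dotProduct_add, add_dotProduct]
    abel
  · rw [if_neg h, if_neg (fun hc => h (by rw [hc]; abel)), zero_mul, mul_zero]

lemma Wmat_zero : Wmat p n 0 0 = 1 := by
  ext y x
  rw [Wmat_apply]
  simp [ee_zero, Matrix.one_apply, eq_comm]

lemma Wmat_pow (a b : Fin n → ZMod p) (m : ℕ) :
    Wmat p n a b ^ m =
      ee p ((m.choose 2 : ZMod p) * (b ⬝ᵥ a)) • Wmat p n (m • a) (m • b) := by
  induction m with
  | zero => simp [Wmat_zero, ee_zero]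
  | succ t ih =>
    rw [pow_succ, ih, Matrix.smul_mul, Wmat_mul, smul_smul, ← ee_add, ← succ_nsmul, ← succ_nsmul]
    congr 2
    have h1 : (t • b) ⬝ᵥ a = (t : ZMod p) * (b ⬝ᵥ a) := by
      rw [← Nat.cast_smul_eq_nsmul (ZMod p), smul_dotProduct, smul_eq_mul]
    have h2 : (t+1).choose 2 = t.choose 2 + t := by
      rw [Nat.choose_succ_succ, Nat.choose_one_right, Nat.add_comm]
    rw [h1, h2]
    push_cast
    ring

lemma ee_dot_sum_zero (b : Fin n → ZMod p) (hb : b ≠ 0) :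
    ∑ x : Fin n → ZMod p, ee p (b ⬝ᵥ x) = 0 := by
  have hfac : ∀ x : Fin n → ZMod p, ee p (b ⬝ᵥ x) = ∏ i, ee p (b i * x i) := by
    intro x
    rw [dotProduct]
    induction (Finset.univ : Finset (Fin n)) using Finset.cons_induction with
    | empty => simp [ee_zero]
    | cons j s hj ih => rw [Finset.sum_cons, ee_add, ih, Finset.prod_cons]
  simp_rw [hfac]
  have hps := Finset.prod_univ_sum (fun _ : Fin n => (Finset.univ : Finset (ZMod p)))
    (fun i t => ee p (b i * t))
  rw [Fintype.piFinset_univ] at hps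
  rw [← hps]
  obtain ⟨j, hj⟩ : ∃ j, b j ≠ 0 := by
    by_contra hc
    push_neg at hc
    exact hb (funext hc)
  exact Finset.prod_eq_zero (Finset.mem_univ j) (sum_ee_mul p (b j) hj)

lemma trace_Wmat (a b : Fin n → ZMod p) :
    (Wmat p n a b).trace = if a = 0 ∧ b = 0 then ((p : ℂ) ^ n) else 0 := by
  rw [Matrix.trace]
  simp_rw [Matrix.diag, Wmat_apply, left_eq_add]
  by_cases ha : a = 0
  · simp only [ha, if_pos rfl, eq_self_iff_true, if_true]
    by_cases hb : b = 0
    · simp [hb, ee_zero, Finset.card_univ, ZMod.card]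
    · rw [if_neg (fun h => hb h.2), ee_dot_sum_zero p n b hb]
  · rw [if_neg (fun h => ha h.1)]
    simp [ha]

end Wmat

section lists
variable {V : Type*} [Fintype V] [DecidableEq V]

lemma pow_val_add {M : Matrix V V ℂ} {p : ℕ} [NeZero p] (hM : M ^ p = 1) (u v : ZMod p) :
    M ^ (u + v).val = M ^ u.val * M ^ v.val := by
  have key : ∀ m : ℕ, M ^ m = M ^ (m % p) := by
    intro m
    conv_lhs => rw [← Nat.div_add_mod m p]
    rw [pow_add, pow_mul, hM, one_pow, one_mul]
  rw [ZMod.val_add, ← key, pow_add]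

lemma listprod_smul (k : ℕ) (r : Fin k → ℂ) (M : Fin k → Matrix V V ℂ) :
    (List.ofFn fun i => r i • M i).prod = (∏ i, r i) • (List.ofFn M).prod := by
  induction k with
  | zero => simp
  | succ t ih =>
    rw [List.ofFn_succ, List.ofFn_succ, List.prod_cons, List.prod_cons,
      ih (fun i => r i.succ) (fun i => M i.succ), Fin.prod_univ_succ,
      Matrix.smul_mul, Matrix.mul_smul, smul_smul]

lemma commute_pow_listprod (k : ℕ) (M : Fin k → Matrix V V ℂ) (x : Matrix V V ℂ)
    (h : ∀ i, Commute x (M i)) (e : Fin k → ℕ) :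
    Commute x (List.ofFn fun i => M i ^ e i).prod := by
  apply Commute.list_prod_right
  intro y hy
  rw [List.mem_ofFn] at hy
  obtain ⟨i, rfl⟩ := hy
  exact (h i).pow_right _

lemma Gm_mul (p : ℕ) [NeZero p] (k : ℕ) (M : Fin k → Matrix V V ℂ)
    (hM : ∀ i j, Commute (M i) (M j)) (hp1 : ∀ i, M i ^ p = 1) (f f' : Fin k → ZMod p) :
    (List.ofFn fun i => M i ^ (f i).val).prod * (List.ofFn fun i => M i ^ (f' i).val).prod =
      (List.ofFn fun i => M i ^ ((f i + f' i)).val).prod := by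
  induction k with
  | zero => simp
  | succ t ih =>
    rw [List.ofFn_succ, List.ofFn_succ, List.ofFn_succ, List.prod_cons, List.prod_cons,
      List.prod_cons]
    have hcom : Commute (M 0 ^ (f' 0).val)
        ((List.ofFn fun i : Fin t => M i.succ ^ (f i.succ).val).prod) :=
      commute_pow_listprod t (fun i => M i.succ) (M 0 ^ (f' 0).val)
        (fun i => ((hM 0 i.succ).pow_left _)) (fun i => (f i.succ).val)
    rw [hcom.symm.mul_mul_mul_comm, ← pow_val_add (hp1 0),
      ih (fun i => M i.succ) (fun i j => hM i.succ j.succ)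
        (fun i => hp1 i.succ) (fun i => f i.succ) (fun i => f' i.succ)]

lemma prod_sum_pow (p : ℕ) [Fact p.Prime] (k : ℕ) (M : Fin k → Matrix V V ℂ) :
    (List.ofFn fun i => ∑ l ∈ Finset.range p, M i ^ l).prod
      = ∑ f : Fin k → ZMod p, (List.ofFn fun i => M i ^ (f i).val).prod := by
  induction k with
  | zero => simp
  | succ t ih =>
    rw [List.ofFn_succ, List.prod_cons, ih (fun i => M i.succ),
      ← sum_zmod_val p (fun m => M 0 ^ m), Finset.sum_mul_sum,
      ← Equiv.sum_comp (Fin.consEquiv (fun _ : Fin (t+1) => ZMod p))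
        (fun f => (List.ofFn fun i => M i ^ (f i).val).prod),
      Fintype.sum_prod_type]
    apply Finset.sum_congr rfl
    intro u _
    apply Finset.sum_congr rfl
    intro f' _
    rw [List.ofFn_succ, List.prod_cons]
    simp [Fin.consEquiv_apply, Fin.cons_zero, Fin.cons_succ]

lemma rank_eq_trace_of_idem (M : Matrix V V ℂ) (h : M * M = M) :
    (M.rank : ℂ) = M.trace := by
  have hf : M.mulVecLin ∘ₗ M.mulVecLin = M.mulVecLin := by
    rw [← Matrix.mulVecLin_mul, h]
  have hproj : LinearMap.IsProj (LinearMap.range M.mulVecLin) M.mulVecLin := by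
    refine ⟨fun x => LinearMap.mem_range_self _ x, ?_⟩
    rintro x ⟨y, rfl⟩
    rw [← LinearMap.comp_apply, hf]
  have htr := hproj.trace
  have h1 : LinearMap.trace ℂ _ M.mulVecLin = M.trace := by
    rw [LinearMap.trace_eq_matrix_trace ℂ (Pi.basisFun ℂ V), LinearMap.toMatrix_eq_toMatrix',
      ← Matrix.toLin'_apply' M, LinearMap.toMatrix'_toLin']
  rw [← h1, htr, Matrix.rank]

end lists

lemma Gm_form (p n : ℕ) [Fact p.Prime] (k : ℕ) (c : Fin k → ZMod p)
    (a b : Fin k → Fin n → ZMod p) (f : Fin k → ZMod p) :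
    ∃ s : ℂ, (List.ofFn fun i => (ee p (c i) • Wmat p n (a i) (b i)) ^ (f i).val).prod
      = s • Wmat p n (∑ i, f i • a i) (∑ i, f i • b i) := by
  induction k with
  | zero =>
    refine ⟨1, ?_⟩
    simp [Wmat_zero p n]
  | succ t ih =>
    haveI : NeZero p := ⟨pne p⟩
    obtain ⟨s, hs⟩ := ih (fun i => c i.succ) (fun i => a i.succ) (fun i => b i.succ)
      (fun i => f i.succ)
    have hnat : ∀ (u : ZMod p) (v : Fin n → ZMod p), u • v = u.val • v := by
      intro u v
      rw [← Nat.cast_smul_eq_nsmul (ZMod p), ZMod.natCast_rightInverse u]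
    rw [List.ofFn_succ, List.prod_cons, hs, smul_pow, Wmat_pow, smul_smul,
      Matrix.smul_mul, Matrix.mul_smul, Wmat_mul, smul_smul, smul_smul,
      Fin.sum_univ_succ (f := fun i : Fin (t+1) => f i • a i),
      Fin.sum_univ_succ (f := fun i : Fin (t+1) => f i • b i),
      hnat (f 0) (a 0), hnat (f 0) (b 0)]
    exact ⟨_, rfl⟩

noncomputable def projMat (p : ℕ) {V : Type*} [Fintype V] [DecidableEq V]
    (g : Matrix V V ℂ) (j : ℕ) : Matrix V V ℂ :=
  (1 / (p : ℂ)) • ∑ l ∈ Finset.range p, ω p ^ (-(j * l : ℤ)) • g ^ l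

/-- Let `g_1, …, g_k` be pairwise commuting `n`-qupit Pauli operators
`g_i = ω^{c_i} X(𝐚^i)Z(𝐛^i)` whose check vectors `(𝐚^i, 𝐛^i)` are linearly
independent over `F_p`, and let `P_{i0} = (1/p) Σ_{l<p} g_i^l`. Then
`rank(P_{10} P_{20} ⋯ P_{k0}) = p^{n−k}`. -/
theorem stmt10 (p n k : ℕ) [Fact p.Prime] (hodd : Odd p)
    (c : Fin k → ZMod p) (a b : Fin k → Fin n → ZMod p)
    (g : Fin k → Matrix (Fin n → ZMod p) (Fin n → ZMod p) ℂ)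
    (hg : ∀ i, g i = ω p ^ (c i).val • (XmatN p n (a i) * ZmatN p n (b i)))
    (hcomm : ∀ i j, Commute (g i) (g j))
    (hind : LinearIndependent (ZMod p) (fun i : Fin k => (a i, b i))) :
    ((List.ofFn fun i => projMat p (g i) 0).prod).rank = p ^ (n - k) := by
  haveI : NeZero p := ⟨pne p⟩
  have hp2 : 2 ≤ p := (Fact.out : p.Prime).two_le
  have hpC : (p : ℂ) ≠ 0 := Nat.cast_ne_zero.mpr (by omega)
  have hg' : ∀ i, g i = ee p (c i) • Wmat p n (a i) (b i) := hg
  -- p-th power of each generator is 1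
  have hchoose : ((p.choose 2 : ℕ) : ZMod p) = 0 := by
    obtain ⟨m, hm⟩ := hodd
    have h2 : 2 ∣ p - 1 := ⟨m, by omega⟩
    have : p.choose 2 = p * ((p - 1) / 2) := by
      rw [Nat.choose_two_right, Nat.mul_div_assoc p h2]
    rw [this]
    push_cast
    rw [ZMod.natCast_self, zero_mul]
  have hsmulp : ∀ v : Fin n → ZMod p, p • v = 0 := by
    intro v
    rw [← Nat.cast_smul_eq_nsmul (ZMod p), ZMod.natCast_self, zero_smul]
  have hp1 : ∀ i, g i ^ p = 1 := by
    intro i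
    rw [hg' i, smul_pow, Wmat_pow, hsmulp, hsmulp, Wmat_zero, hchoose, zero_mul, ee_zero,
      smul_smul, mul_one]
    have : ee p (c i) ^ p = 1 := by
      rw [← ee_nsmul, ← Nat.cast_smul_eq_nsmul (ZMod p), ZMod.natCast_self, zero_smul, ee_zero]
    rw [this, one_smul]
  -- the projector product, unscaled
  have hproj : ∀ i, projMat p (g i) 0 = (1 / (p:ℂ)) • ∑ l ∈ Finset.range p, g i ^ l := by
    intro i
    rw [projMat]
    congr 1
    refine Finset.sum_congr rfl fun l _ => ?_
    norm_num
  have hP : (List.ofFn fun i => projMat p (g i) 0).prod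
      = ((1 / (p:ℂ)) ^ k) • ∑ f : Fin k → ZMod p,
          (List.ofFn fun i => g i ^ (f i).val).prod := by
    simp_rw [hproj]
    rw [listprod_smul, Finset.prod_const, Finset.card_univ, Fintype.card_fin,
      prod_sum_pow p k g]
  set S := ∑ f : Fin k → ZMod p, (List.ofFn fun i => g i ^ (f i).val).prod with hS
  set P := (List.ofFn fun i => projMat p (g i) 0).prod with hPdef
  -- S * S = p^k • S
  have hGmul : ∀ f f' : Fin k → ZMod p,
      (List.ofFn fun i => g i ^ (f i).val).prod * (List.ofFn fun i => g i ^ (f' i).val).prod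
        = (List.ofFn fun i => g i ^ ((f + f') i).val).prod :=
    fun f f' => Gm_mul p k g hcomm hp1 f f'
  have hSS : S * S = ((p : ℂ) ^ k) • S := by
    rw [hS, Finset.sum_mul_sum]
    have hinner : ∀ f : Fin k → ZMod p,
        ∑ f' : Fin k → ZMod p, (List.ofFn fun i => g i ^ (f i).val).prod *
          (List.ofFn fun i => g i ^ (f' i).val).prod = S := by
      intro f
      simp_rw [hGmul f]
      rw [Fintype.sum_equiv (Equiv.addLeft f)
        (fun f' => (List.ofFn fun i => g i ^ ((f + f') i).val).prod)
        (fun h => (List.ofFn fun i => g i ^ (h i).val).prod) (fun f' => rfl)]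
    simp_rw [hinner]
    rw [Finset.sum_const, Finset.card_univ, Fintype.card_fun, ZMod.card, Fintype.card_fin,
      ← Nat.cast_smul_eq_nsmul ℂ]
    push_cast
    rfl
  -- idempotence
  have hidem : P * P = P := by
    rw [hP, Matrix.smul_mul, Matrix.mul_smul, smul_smul, hSS, smul_smul]
    congr 1
    field_simp
    rw [← mul_pow, one_div_mul_cancel hpC, one_pow]
  -- trace of S
  have htrG0 : (List.ofFn fun i => g i ^ ((0 : Fin k → ZMod p) i).val).prod = 1 := by
    apply List.prod_eq_one
    intro x hx
    rw [List.mem_ofFn] at hx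
    obtain ⟨i, rfl⟩ := hx
    simp [ZMod.val_zero]
  have htrS : S.trace = (p : ℂ) ^ n := by
    rw [hS, Matrix.trace_sum]
    rw [Finset.sum_eq_single_of_mem 0 (Finset.mem_univ _)]
    · rw [htrG0, Matrix.trace_one, Fintype.card_fun, ZMod.card, Fintype.card_fin]
      push_cast
      rfl
    · intro f _ hf
      obtain ⟨s, hs⟩ := Gm_form p n k c a b f
      have hsum : (∑ i, f i • a i, ∑ i, f i • b i) ≠ (0, 0) := by
        intro hc
        apply hf
        funext i
        refine Fintype.linearIndependent_iff.mp hind f ?_ i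
        have h1 := congrArg Prod.fst hc
        have h2 := congrArg Prod.snd hc
        simp only at h1 h2
        refine Prod.ext_iff.mpr ⟨?_, ?_⟩
        · rw [Prod.fst_sum]; simpa using h1
        · rw [Prod.snd_sum]; simpa using h2
      have : ¬((∑ i, f i • a i) = 0 ∧ (∑ i, f i • b i) = 0) := by
        intro hc
        exact hsum (by rw [hc.1, hc.2])
      have hgW : ∀ i, g i ^ (f i).val = (ee p (c i) • Wmat p n (a i) (b i)) ^ (f i).val := by
        intro i; rw [hg' i]
      simp_rw [hgW]
      rw [hs, Matrix.trace_smul, trace_Wmat, if_neg this, smul_zero]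
  have htrP : P.trace = (p : ℂ) ^ n / (p : ℂ) ^ k := by
    rw [hP, Matrix.trace_smul, htrS]
    rw [smul_eq_mul]
    field_simp
    rw [← mul_pow, one_div_mul_cancel hpC, one_pow]
  -- rank = trace
  have hrk : ((P.rank : ℂ)) = (p : ℂ) ^ n / (p : ℂ) ^ k := by
    rw [rank_eq_trace_of_idem P hidem, htrP]
  have hnat : P.rank * p ^ k = p ^ n := by
    have : ((P.rank * p ^ k : ℕ) : ℂ) = ((p ^ n : ℕ) : ℂ) := by
      push_cast
      rw [hrk]
      field_simp
    exact_mod_cast this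
  have hkn : k ≤ n := by
    by_contra hkn
    have hr1 : 1 ≤ P.rank := by
      rcases Nat.eq_zero_or_pos P.rank with h0 | h1
      · exfalso
        rw [h0, zero_mul] at hnat
        have := pow_pos (show 0 < p by omega) n
        omega
      · exact h1
    have : p ^ k ≤ p ^ n := le_trans (Nat.le_mul_of_pos_left _ hr1) (le_of_eq hnat)
    exact hkn ((Nat.pow_le_pow_iff_right (by omega)).mp this)
  have : P.rank * p ^ k = p ^ (n - k) * p ^ k := by
    rw [hnat, ← pow_add]
    congr 1
    omega
  exact Nat.eq_of_mul_eq_mul_right (pow_pos (show 0 < p by omega) k) this
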